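/- arXiv:2305.01756 — 3 statements merged into one kernel-verified Lean document; each statement's English description precedes it below -/
import Mathlib

section
/- Let C be an internal component of T \ F with boundary vertices f_1 < f_2 < ... < f_k (in DFS preorder). Then, as sets of DFS numbers, C = [r_C, f_1 - 1] ∪ [f_1 + ND(f_1), f_2 - 1] ∪ ... ∪ [f_{k-1} + ND(f_{k-1}), f_k - 1] ∪ [f_k + ND(f_k), r_C + ND(r_C) - 1], i.e., C is the union of at most k+1 intervals of consecutive DFS numbers. -/
variable {n : ℕ}

/-- `Anc p v u` : `v` is an ancestor of `u` in the rooted tree with parent function `p`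
(every vertex is an ancestor of itself). -/
def Anc (p : Fin n → Fin n) (v u : Fin n) : Prop :=
  Relation.ReflTransGen (fun a b => p a = b) u v

/-- `ND p v` : the number of descendants of `v` (including `v`). -/
noncomputable def ND (p : Fin n → Fin n) (v : Fin n) : ℕ :=
  Set.ncard {u | Anc p v u}

/-- `InComp p F v u` : `u` lies in the same connected component of `T \ F` as `v`
(connectivity via tree edges avoiding the failed set `F`). -/
def InComp (p : Fin n → Fin n) (F : Set (Fin n)) (v u : Fin n) : Prop :=
  Relation.ReflTransGen (fun a b => a ∉ F ∧ b ∉ F ∧ (p a = b ∨ p b = a)) v u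

/-- `ρ` is the root of its connected component of `T \ F`:
`ρ` is non-failed and an ancestor of every vertex of its component. -/
def IsCompRoot (p : Fin n → Fin n) (F : Set (Fin n)) (ρ : Fin n) : Prop :=
  ρ ∉ F ∧ ∀ u, InComp p F ρ u → Anc p ρ u

/-- The component rooted at `ρ` is internal: some failed vertex is a descendant of `ρ`. -/
def Internal (p : Fin n → Fin n) (F : Set (Fin n)) (ρ : Fin n) : Prop :=
  ∃ f ∈ F, Anc p ρ f

/-- `b` is a boundary vertex of the component of `T \ F` rooted at `ρ`. -/
def Boundary (p : Fin n → Fin n) (F : Set (Fin n)) (ρ b : Fin n) : Prop :=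
  b ∈ F ∧ InComp p F ρ (p b)

/-- `(x, y)` is a back-edge: a non-tree edge of `G` with `y` an ancestor of `x`. -/
def IsBack (G : SimpleGraph (Fin n)) (p : Fin n → Fin n) (x y : Fin n) : Prop :=
  G.Adj x y ∧ Anc p y x ∧ p x ≠ y

/-- The set of lower endpoints `y < v` of back-edges whose upper endpoint is a
descendant of `v`. -/
def LowSet (G : SimpleGraph (Fin n)) (p : Fin n → Fin n) (v : Fin n) : Set (Fin n) :=
  {y | (∃ x, Anc p v x ∧ IsBack G p x y) ∧ y < v}

/-- `IsLow G p k v y` : `y = low_k(v)`, i.e. `y` is the `k`-th smallest element of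
`LowSet G p v` (for `k ≥ 1`). -/
def IsLow (G : SimpleGraph (Fin n)) (p : Fin n → Fin n) (k : ℕ) (v y : Fin n) : Prop :=
  y ∈ LowSet G p v ∧ Set.ncard {z ∈ LowSet G p v | z < y} = k - 1

/-- `a` and `b` are connected in `G \ F`. -/
def ConnGF (G : SimpleGraph (Fin n)) (F : Set (Fin n)) (a b : Fin n) : Prop :=
  Relation.ReflTransGen (fun u w => G.Adj u w ∧ u ∉ F ∧ w ∉ F) a b

/-- `g = parent_F(f)` : `g` is the nearest (deepest) proper ancestor of `f` lying in `F`. -/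
def NearestF (p : Fin n → Fin n) (F : Set (Fin n)) (f g : Fin n) : Prop :=
  g ∈ F ∧ Anc p g f ∧ g ≠ f ∧ ∀ g' ∈ F, Anc p g' f → g' ≠ f → Anc p g' g


section Aux

variable {p : Fin n → Fin n} {r : Fin n} {F : Set (Fin n)} {ρ : Fin n}

lemma anc_refl (v : Fin n) : Anc p v v := Relation.ReflTransGen.refl

lemma anc_parent (u : Fin n) : Anc p (p u) u := Relation.ReflTransGen.single rfl

lemma anc_trans {a b c : Fin n} (h1 : Anc p a b) (h2 : Anc p b c) : Anc p a c :=
  Relation.ReflTransGen.trans h2 h1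

lemma ple (hpr : p r = r) (hplt : ∀ v, v ≠ r → p v < v) (a : Fin n) : p a ≤ a := by
  by_cases h : a = r
  · subst h; exact le_of_eq hpr
  · exact le_of_lt (hplt a h)

lemma anc_le (hpr : p r = r) (hplt : ∀ v, v ≠ r → p v < v) {v u : Fin n}
    (h : Anc p v u) : v ≤ u := by
  induction h with
  | refl => exact le_refl _
  | tail h1 h2 ih => exact le_trans (h2 ▸ ple hpr hplt _) ih

lemma anc_antisymm (hpr : p r = r) (hplt : ∀ v, v ≠ r → p v < v) {v u : Fin n}
    (h1 : Anc p v u) (h2 : Anc p u v) : v = u :=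
  le_antisymm (anc_le hpr hplt h1) (anc_le hpr hplt h2)

lemma anc_of_ne {v u : Fin n} (h : Anc p v u) (hne : u ≠ v) : Anc p v (p u) := by
  rcases Relation.ReflTransGen.cases_head h with h' | ⟨b, hb, h'⟩
  · exact absurd h' hne
  · exact hb ▸ h'

lemma anc_mid (hpre : ∀ u v w : Fin n, u < v → v < w → Anc p u w → Anc p u v)
    {v w u : Fin n} (h1 : v ≤ w) (h2 : w ≤ u) (h : Anc p v u) : Anc p v w := by
  rcases eq_or_lt_of_le h1 with rfl | h1
  · exact anc_refl _
  · rcases eq_or_lt_of_le h2 with rfl | h2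
    · exact h
    · exact hpre v w u h1 h2 h

lemma nat_convex (s : Finset ℕ) (hne : s.Nonempty)
    (hconv : ∀ a ∈ s, ∀ b ∈ s, ∀ c, a ≤ c → c ≤ b → c ∈ s) :
    s = Finset.Icc (s.min' hne) (s.min' hne + s.card - 1) := by
  set a := s.min' hne with ha
  set b := s.max' hne with hb
  have hmm : a ≤ b := s.min'_le _ (s.max'_mem hne)
  have h1 : s = Finset.Icc a b := by
    apply Finset.Subset.antisymm
    · intro x hx
      exact Finset.mem_Icc.2 ⟨s.min'_le _ hx, s.le_max' _ hx⟩
    · intro x hx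
      rw [Finset.mem_Icc] at hx
      exact hconv _ (s.min'_mem hne) _ (s.max'_mem hne) x hx.1 hx.2
  have hc : s.card = b + 1 - a := by rw [h1, Nat.card_Icc]
  have h2 : a + (b + 1 - a) - 1 = b := by omega
  rw [hc, h2]
  exact h1

lemma desc_interval (hpr : p r = r)
    (hplt : ∀ v, v ≠ r → p v < v)
    (hpre : ∀ u v w : Fin n, u < v → v < w → Anc p u w → Anc p u v)
    (v : Fin n) :
    {m : ℕ | ∃ u, Anc p v u ∧ (u : ℕ) = m} = Set.Icc (v : ℕ) ((v : ℕ) + ND p v - 1) := by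
  classical
  set D : Finset (Fin n) := Finset.univ.filter (fun u => Anc p v u) with hD
  have hmemD : ∀ u, u ∈ D ↔ Anc p v u := by intro u; simp [hD]
  have hND : ND p v = D.card := by
    rw [ND]
    have : {u | Anc p v u} = ↑D := by ext u; simp [hmemD]
    rw [this, Set.ncard_coe_finset]
  set s : Finset ℕ := D.image Fin.val with hs
  have hmems : ∀ m, m ∈ s ↔ ∃ u, Anc p v u ∧ (u : ℕ) = m := by
    intro m; simp [hs, hmemD]
  have hsv : (v : ℕ) ∈ s := (hmems _).2 ⟨v, anc_refl v, rfl⟩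
  have hne : s.Nonempty := ⟨_, hsv⟩
  have hcard : s.card = D.card := Finset.card_image_of_injective _ Fin.val_injective
  have hconv : ∀ a ∈ s, ∀ b ∈ s, ∀ c, a ≤ c → c ≤ b → c ∈ s := by
    intro a ha b hb c hac hcb
    obtain ⟨ua, hua, rfl⟩ := (hmems a).1 ha
    obtain ⟨ub, hub, rfl⟩ := (hmems b).1 hb
    have hcn : c < n := lt_of_le_of_lt hcb ub.isLt
    refine (hmems c).2 ⟨⟨c, hcn⟩, ?_, rfl⟩
    have h1 : v ≤ (⟨c, hcn⟩ : Fin n) := le_trans (anc_le hpr hplt hua) hac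
    exact anc_mid hpre h1 hcb hub
  have hmin : s.min' hne = (v : ℕ) := by
    apply le_antisymm (s.min'_le _ hsv)
    apply s.le_min'
    intro y hy
    obtain ⟨u, hu, rfl⟩ := (hmems y).1 hy
    exact anc_le hpr hplt hu
  have h1 := nat_convex s hne hconv
  rw [hmin, hcard, ← hND] at h1
  ext m
  rw [Set.mem_setOf_eq, ← hmems, h1, Finset.mem_Icc, Set.mem_Icc]

lemma comp_clean (hpr : p r = r) (hplt : ∀ v, v ≠ r → p v < v)
    (hρ : IsCompRoot p F ρ) {u : Fin n} (h : InComp p F ρ u) :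
    ∀ w, Anc p ρ w → Anc p w u → w ∉ F := by
  induction h with
  | refl =>
    intro w h1 h2
    have : w = ρ := anc_antisymm hpr hplt h2 h1
    exact this ▸ hρ.1
  | @tail c u' h1 h2 ih =>
    obtain ⟨hcF, huF, hor⟩ := h2
    intro w hw1 hw2
    rcases hor with hpc | hpu
    · exact ih w hw1 (anc_trans hw2 (hpc ▸ anc_parent c))
    · by_cases hwe : w = u'
      · exact hwe ▸ huF
      · exact ih w hw1 (hpu ▸ anc_of_ne hw2 (fun h => hwe h.symm))

lemma comp_of_clean (hρF : ρ ∉ F) {u : Fin n} (h1 : Anc p ρ u)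
    (h2 : ∀ w, Anc p ρ w → Anc p w u → w ∉ F) : InComp p F ρ u := by
  unfold Anc at h1
  induction h1 using Relation.ReflTransGen.head_induction_on with
  | refl => exact Relation.ReflTransGen.refl
  | @head x c hstep hchain ih =>
    subst hstep
    have hx : Anc p ρ x := Relation.ReflTransGen.head rfl hchain
    have hclean : ∀ w, Anc p ρ w → Anc p w (p x) → w ∉ F := by
      intro w hw1 hw2
      exact h2 w hw1 (anc_trans hw2 (anc_parent x))
    have hIC : InComp p F ρ (p x) := ih hclean
    refine hIC.tail ?_
    exact ⟨h2 _ hchain (anc_parent x), h2 _ hx (anc_refl _), Or.inr rfl⟩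

lemma comp_iff_desc (hpr : p r = r) (hplt : ∀ v, v ≠ r → p v < v) (hrF : r ∉ F)
    (hρ : IsCompRoot p F ρ) {k : ℕ} {fs : ℕ → Fin n}
    (hbound : ∀ i, i < k → Boundary p F ρ (fs i))
    (hall : ∀ b, Boundary p F ρ b → ∃ i, i < k ∧ fs i = b) (u : Fin n) :
    InComp p F ρ u ↔ Anc p ρ u ∧ ∀ i, i < k → ¬ Anc p (fs i) u := by
  classical
  constructor
  · intro h
    refine ⟨hρ.2 u h, fun i hi hanc => ?_⟩
    obtain ⟨hfF, hfc⟩ := hbound i hi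
    have h1 : Anc p ρ (fs i) := anc_trans (hρ.2 _ hfc) (anc_parent _)
    exact comp_clean hpr hplt hρ h (fs i) h1 hanc hfF
  · rintro ⟨h1, h2⟩
    refine comp_of_clean hρ.1 h1 ?_
    intro w hw1 hw2 hwF
    set S : Finset (Fin n) := Finset.univ.filter (fun x => x ∈ F ∧ Anc p ρ x ∧ Anc p x w)
      with hS
    have hwS : w ∈ S := by simp [hS, hwF, hw1, anc_refl w]
    have hne : S.Nonempty := ⟨w, hwS⟩
    set w₀ := S.min' hne with hw₀
    have hw₀S : w₀ ∈ S := S.min'_mem hne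
    rw [hS, Finset.mem_filter] at hw₀S
    obtain ⟨-, hw₀F, hw₀anc, hw₀w⟩ := hw₀S
    have hw₀ρ : w₀ ≠ ρ := fun h => hρ.1 (h ▸ hw₀F)
    have hw₀r : w₀ ≠ r := fun h => hrF (h ▸ hw₀F)
    have hw₀p : Anc p ρ (p w₀) := anc_of_ne hw₀anc hw₀ρ
    have hclean : ∀ x, Anc p ρ x → Anc p x (p w₀) → x ∉ F := by
      intro x hx1 hx2 hxF
      have hxS : x ∈ S := by
        rw [hS, Finset.mem_filter]
        exact ⟨Finset.mem_univ _, hxF, hx1,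
          anc_trans (anc_trans hx2 (anc_parent w₀)) hw₀w⟩
      have hle : w₀ ≤ x := S.min'_le _ hxS
      have hlt : x < w₀ := lt_of_le_of_lt (anc_le hpr hplt hx2) (hplt w₀ hw₀r)
      exact absurd hle (not_le.2 hlt)
    have hB : Boundary p F ρ w₀ := ⟨hw₀F, comp_of_clean hρ.1 hw₀p hclean⟩
    obtain ⟨i, hik, hfi⟩ := hall w₀ hB
    exact h2 i hik (hfi ▸ anc_trans hw₀w hw2)

lemma arith_core (k a N : ℕ) (hN : 1 ≤ N) (f g : ℕ → ℕ)
    (h1 : ∀ i, i < k → a < f i)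
    (h2 : ∀ i, i < k → f i < g i)
    (h3 : ∀ i j, i < j → j < k → g i ≤ f j)
    (h4 : ∀ i, i < k → g i ≤ a + N) (m : ℕ) :
    (a ≤ m ∧ m ≤ a + N - 1 ∧ ∀ i, i < k → ¬(f i ≤ m ∧ m ≤ g i - 1)) ↔
      ∃ j, j ≤ k ∧ (if j = 0 then a else g (j - 1)) ≤ m ∧
        m ≤ (if j = k then a + N - 1 else f j - 1) := by
  classical
  constructor
  · rintro ⟨hm1, hm2, hm3⟩
    by_cases hne : ((Finset.range k).filter (fun i => f i ≤ m)).Nonempty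
    · obtain ⟨i₀, hi₀mem, hi₀max⟩ := Finset.exists_max_image _ id hne
      rw [Finset.mem_filter, Finset.mem_range] at hi₀mem
      obtain ⟨hi₀k, hfi₀⟩ := hi₀mem
      refine ⟨i₀ + 1, hi₀k, ?_, ?_⟩
      · rw [if_neg (Nat.succ_ne_zero i₀)]
        simp only [Nat.add_sub_cancel]
        have := hm3 i₀ hi₀k
        have := h2 i₀ hi₀k
        omega
      · by_cases hjk : i₀ + 1 = k
        · rw [if_pos hjk]; exact hm2
        · rw [if_neg hjk]
          have hjk' : i₀ + 1 < k := lt_of_le_of_ne hi₀k hjk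
          have hnot : ¬ f (i₀ + 1) ≤ m := by
            intro hle
            have := hi₀max (i₀ + 1) (Finset.mem_filter.2 ⟨Finset.mem_range.2 hjk', hle⟩)
            simp only [id] at this
            omega
          have := hnot
          have := h1 (i₀ + 1) hjk'
          omega
    · refine ⟨0, Nat.zero_le k, by rw [if_pos rfl]; exact hm1, ?_⟩
      by_cases hk : (0 : ℕ) = k
      · rw [if_pos hk]; exact hm2
      · rw [if_neg hk]
        have hk' : 0 < k := by omega
        have h0 : ¬ f 0 ≤ m := fun h =>
          hne ⟨0, Finset.mem_filter.2 ⟨Finset.mem_range.2 hk', h⟩⟩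
        have := h0
        have := h1 0 hk'
        omega
  · rintro ⟨j, hjk, hL, hR⟩
    have hamem : a ≤ m := by
      by_cases hj0 : j = 0
      · rwa [if_pos hj0] at hL
      · rw [if_neg hj0] at hL
        have hj1k : j - 1 < k := by omega
        have := h1 (j - 1) hj1k
        have := h2 (j - 1) hj1k
        omega
    have hbmem : m ≤ a + N - 1 := by
      by_cases hjek : j = k
      · rwa [if_pos hjek] at hR
      · rw [if_neg hjek] at hR
        have hjk' : j < k := lt_of_le_of_ne hjk hjek
        have := h2 j hjk'
        have := h4 j hjk'
        have := h1 j hjk'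
        omega
    refine ⟨hamem, hbmem, ?_⟩
    rintro i hik ⟨hfi, hgi⟩
    by_cases hij : i < j
    · have hj0 : j ≠ 0 := by omega
      rw [if_neg hj0] at hL
      have hgile : g i ≤ g (j - 1) := by
        rcases eq_or_lt_of_le (by omega : i ≤ j - 1) with h | h
        · rw [h]
        · have hj1k : j - 1 < k := by omega
          exact le_trans (h3 i (j - 1) h hj1k) (le_of_lt (h2 (j - 1) hj1k))
      have := h2 i hik
      omega
    · push_neg at hij
      have hjek : j ≠ k := by omega
      rw [if_neg hjek] at hR
      have hjk' : j < k := lt_of_le_of_ne hjk hjek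
      have hfle : f j ≤ f i := by
        rcases eq_or_lt_of_le hij with h | h
        · rw [h]
        · exact le_trans (le_of_lt (h2 j hjk')) (h3 j i h hik)
      have := h1 j hjk'
      omega

end Aux

/-- Let `C` be an internal component of `T \ F` with boundary vertices
`f₁ < f₂ < ... < f_k` (here `fᵢ = fs (i-1)`). Then, as sets of DFS numbers,
`C = [r_C, f₁-1] ∪ [f₁+ND(f₁), f₂-1] ∪ ... ∪ [f_k+ND(f_k), r_C+ND(r_C)-1]`. -/
theorem stmt6
    (G : SimpleGraph (Fin n)) (p : Fin n → Fin n) (r : Fin n)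
    (hG : G.Connected)
    (hpr : p r = r) (hplt : ∀ v, v ≠ r → p v < v) (hroot : ∀ v, Anc p r v)
    (hspan : ∀ v, v ≠ r → G.Adj (p v) v)
    (hdfs : ∀ x y, G.Adj x y → Anc p x y ∨ Anc p y x)
    (hpre : ∀ u v w : Fin n, u < v → v < w → Anc p u w → Anc p u v)
    (F : Set (Fin n)) (hrF : r ∉ F)
    (ρ : Fin n) (hρ : IsCompRoot p F ρ) (hint : Internal p F ρ)
    (k : ℕ) (fs : ℕ → Fin n)
    (hmono : ∀ i j, i < j → j < k → fs i < fs j)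
    (hbound : ∀ i, i < k → Boundary p F ρ (fs i))
    (hall : ∀ b, Boundary p F ρ b → ∃ i, i < k ∧ fs i = b) :
    {m : ℕ | ∃ u, InComp p F ρ u ∧ (u : ℕ) = m} =
      ⋃ j ∈ Set.Icc 0 k,
        Set.Icc
          (if j = 0 then (ρ : ℕ) else ((fs (j - 1) : ℕ) + ND p (fs (j - 1))))
          (if j = k then (ρ : ℕ) + ND p ρ - 1 else (fs j : ℕ) - 1) := by
  classical
  have hND1 : ∀ v : Fin n, 1 ≤ ND p v := by
    intro v
    have : 0 < ND p v := (Set.ncard_pos (Set.toFinite _)).2 ⟨v, anc_refl v⟩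
    omega
  have hmem : ∀ v u : Fin n, Anc p v u ↔ ((v : ℕ) ≤ u ∧ (u : ℕ) ≤ (v : ℕ) + ND p v - 1) := by
    intro v u
    have hdi := desc_interval hpr hplt hpre v
    constructor
    · intro h
      have hm : (u : ℕ) ∈ {m : ℕ | ∃ u', Anc p v u' ∧ (u' : ℕ) = m} := ⟨u, h, rfl⟩
      rw [hdi] at hm
      exact hm
    · intro h
      have hm : (u : ℕ) ∈ Set.Icc (v : ℕ) ((v : ℕ) + ND p v - 1) := h
      rw [← hdi] at hm
      obtain ⟨u', hu', he⟩ := hm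
      have : u' = u := Fin.val_injective he
      exact this ▸ hu'
  have hancfi : ∀ i, i < k → Anc p ρ (fs i) := fun i hi =>
    anc_trans (hρ.2 _ (hbound i hi).2) (anc_parent _)
  have hfir : ∀ i, i < k → fs i ≠ r := fun i hi h => hrF (h ▸ (hbound i hi).1)
  have h1' : ∀ i, i < k → (ρ : ℕ) < (fs i : ℕ) := by
    intro i hi
    have ha := anc_le hpr hplt (hρ.2 _ (hbound i hi).2)
    have hb := hplt (fs i) (hfir i hi)
    exact lt_of_le_of_lt ha hb
  have h2' : ∀ i, i < k → (fs i : ℕ) < (fs i : ℕ) + ND p (fs i) := by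
    intro i hi
    have := hND1 (fs i)
    omega
  have hNotAnc : ∀ i j, i < j → j < k → ¬ Anc p (fs i) (fs j) := by
    intro i j hij hjk hanc
    have hne : fs j ≠ fs i := ne_of_gt (hmono i j hij hjk)
    have ha2 : Anc p (fs i) (p (fs j)) := anc_of_ne hanc hne
    have ha3 : Anc p ρ (fs i) := hancfi i (lt_trans hij hjk)
    exact comp_clean hpr hplt hρ (hbound j hjk).2 (fs i) ha3 ha2 (hbound i (lt_trans hij hjk)).1
  have h3' : ∀ i j, i < j → j < k → (fs i : ℕ) + ND p (fs i) ≤ (fs j : ℕ) := by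
    intro i j hij hjk
    have h := hNotAnc i j hij hjk
    rw [hmem] at h
    push_neg at h
    have hlt : (fs i : ℕ) < (fs j : ℕ) := hmono i j hij hjk
    have := hND1 (fs i)
    have := h (le_of_lt hlt)
    omega
  have h4' : ∀ i, i < k → (fs i : ℕ) + ND p (fs i) ≤ (ρ : ℕ) + ND p ρ := by
    intro i hi
    have hpt : ((fs i : ℕ) + ND p (fs i) - 1) ∈
        Set.Icc (fs i : ℕ) ((fs i : ℕ) + ND p (fs i) - 1) := by
      have := hND1 (fs i)
      exact Set.mem_Icc.2 ⟨by omega, le_refl _⟩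
    rw [← desc_interval hpr hplt hpre (fs i)] at hpt
    obtain ⟨u, hu, he⟩ := hpt
    have hanc : Anc p ρ u := anc_trans (hancfi i hi) hu
    rw [hmem] at hanc
    have := hND1 ρ
    have := hND1 (fs i)
    omega
  have hchar : ∀ m : ℕ, (∃ u, InComp p F ρ u ∧ (u : ℕ) = m) ↔
      ((ρ : ℕ) ≤ m ∧ m ≤ (ρ : ℕ) + ND p ρ - 1 ∧
        ∀ i, i < k → ¬((fs i : ℕ) ≤ m ∧ m ≤ (fs i : ℕ) + ND p (fs i) - 1)) := by
    intro m
    constructor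
    · rintro ⟨u, hu, rfl⟩
      rw [comp_iff_desc hpr hplt hrF hρ hbound hall] at hu
      obtain ⟨ha, hf⟩ := hu
      rw [hmem] at ha
      exact ⟨ha.1, ha.2, fun i hi hc => hf i hi ((hmem _ _).2 hc)⟩
    · rintro ⟨ha, hb, hf⟩
      have hm : m ∈ Set.Icc (ρ : ℕ) ((ρ : ℕ) + ND p ρ - 1) := ⟨ha, hb⟩
      rw [← desc_interval hpr hplt hpre ρ] at hm
      obtain ⟨u, hu, rfl⟩ := hm
      refine ⟨u, ?_, rfl⟩
      rw [comp_iff_desc hpr hplt hrF hρ hbound hall]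
      exact ⟨hu, fun i hi hanc => hf i hi ((hmem _ _).1 hanc)⟩
  ext m
  have harith := arith_core k (ρ : ℕ) (ND p ρ) (hND1 ρ) (fun i => (fs i : ℕ))
    (fun i => (fs i : ℕ) + ND p (fs i)) h1' h2' h3' h4' m
  constructor
  · intro hm
    rw [Set.mem_setOf_eq] at hm
    obtain ⟨j, hjk, hL, hR⟩ := harith.mp ((hchar m).mp hm)
    exact Set.mem_biUnion (Set.mem_Icc.2 ⟨Nat.zero_le _, hjk⟩) (Set.mem_Icc.2 ⟨hL, hR⟩)
  · intro hm
    rw [Set.mem_iUnion₂] at hm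
    obtain ⟨j, hj, hmj⟩ := hm
    rw [Set.mem_setOf_eq]
    refine (hchar m).mpr (harith.mpr ⟨j, (Set.mem_Icc.1 hj).2, ?_, ?_⟩)
    · exact (Set.mem_Icc.1 hmj).1
    · exact (Set.mem_Icc.1 hmj).2
end

section
/- Let e be an edge of G \ F whose endpoints lie in different connected components of T \ F. Then e is a back-edge of T, and moreover either (i) both endpoints of e lie in internal components of T \ F, or (ii) one endpoint lies in a hanging subtree H and the other lies in an internal component C whose root r_C is a proper ancestor of r_H. -/
variable {n : ℕ}

section Aux

variable {p : Fin n → Fin n} {F : Set (Fin n)}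

lemma incomp_symm {a b : Fin n} (h : InComp p F a b) : InComp p F b a := by
  have hs : Symmetric (fun a b : Fin n => a ∉ F ∧ b ∉ F ∧ (p a = b ∨ p b = a)) := by
    rintro a b ⟨h1, h2, h3⟩
    exact ⟨h2, h1, h3.symm⟩
  exact (@Relation.ReflTransGen.stdSymm _ _ ⟨fun a b h => hs h⟩).symm _ _ h

/-- Totality along the parent chain: two vertices reachable from the same start
are comparable. -/
lemma rtg_total {x a b : Fin n}
    (ha : Relation.ReflTransGen (fun a b => p a = b) x a)
    (hb : Relation.ReflTransGen (fun a b => p a = b) x b) :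
    Relation.ReflTransGen (fun a b => p a = b) a b ∨
      Relation.ReflTransGen (fun a b => p a = b) b a := by
  revert hb
  induction ha using Relation.ReflTransGen.head_induction_on with
  | refl => intro hb; exact Or.inl hb
  | @head u c huc hca ih =>
    intro hb
    rcases Relation.ReflTransGen.cases_head hb with rfl | ⟨c', huc', hc'b⟩
    · exact Or.inr (Relation.ReflTransGen.head huc hca)
    · have hcc : c' = c := by rw [← huc, ← huc']
      subst hcc
      exact ih hc'b

/-- In a hanging component, every descendant of the root is in the component. -/
lemma hanging_incomp {ρ : Fin n} (hρF : ρ ∉ F) (hni : ¬ Internal p F ρ) {u : Fin n}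
    (h : Anc p ρ u) : InComp p F ρ u := by
  have hnot : ∀ w, Anc p ρ w → w ∉ F := fun w hw hwF => hni ⟨w, hwF, hw⟩
  induction h using Relation.ReflTransGen.head_induction_on with
  | refl => exact Relation.ReflTransGen.refl
  | @head u c huc hcρ ih =>
    exact Relation.ReflTransGen.tail ih
      ⟨hnot _ hcρ, hnot _ (Relation.ReflTransGen.head huc hcρ), Or.inr huc⟩

/-- Going up the tree from `x` to an ancestor `y`, either we stay in the same
component or we hit a failed vertex which is a descendant of `y`. -/
lemma failed_on_path {x y : Fin n}
    (h : Relation.ReflTransGen (fun a b => p a = b) x y) (hx : x ∉ F) :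
    InComp p F x y ∨ ∃ f ∈ F, Relation.ReflTransGen (fun a b => p a = b) f y := by
  revert hx
  induction h using Relation.ReflTransGen.head_induction_on with
  | refl => intro _; exact Or.inl Relation.ReflTransGen.refl
  | @head u c huc hcy ih =>
    intro hu
    by_cases hcF : c ∈ F
    · exact Or.inr ⟨c, hcF, hcy⟩
    · rcases ih hcF with h' | h'
      · exact Or.inl (Relation.ReflTransGen.head ⟨hu, hcF, Or.inl huc⟩ h')
      · exact Or.inr h'

/-- The main case analysis, for `y` an ancestor of `x`. -/
lemma main_case {x y ρx ρy : Fin n}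
    (hx : x ∉ F) (hdiff : ¬ InComp p F x y)
    (hρx : IsCompRoot p F ρx) (hxin : InComp p F ρx x)
    (hρy : IsCompRoot p F ρy) (hyin : InComp p F ρy y)
    (hyx : Anc p y x) :
    Internal p F ρy ∧ (¬ Internal p F ρx → Anc p ρy ρx ∧ ρy ≠ ρx) := by
  have hρyy : Anc p ρy y := hρy.2 y hyin
  have hρxx : Anc p ρx x := hρx.2 x hxin
  have hne : ρy ≠ ρx := by
    rintro rfl
    exact hdiff ((incomp_symm hxin).trans hyin)
  obtain hic | ⟨f, hfF, hfy⟩ := failed_on_path hyx hx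
  · exact absurd hic hdiff
  refine ⟨⟨f, hfF, hfy.trans hρyy⟩, fun hni => ?_⟩
  rcases rtg_total hyx hρxx with h | h
  · -- h : Anc p ρx y, so y lies in the hanging subtree of ρx, contradiction
    exact absurd ((incomp_symm hxin).trans (hanging_incomp hρx.1 hni h)) hdiff
  · exact ⟨h.trans hρyy, hne⟩

end Aux

/-- Every edge of `G \ F` whose endpoints lie in different components of `T \ F`
is a back-edge, and either both endpoints lie in internal components, or one lies
in a hanging subtree `H` and the other in an internal component whose root is a
proper ancestor of `r_H`. -/
theorem stmt9
    (G : SimpleGraph (Fin n)) (p : Fin n → Fin n) (r : Fin n)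
    (hG : G.Connected)
    (hpr : p r = r) (hplt : ∀ v, v ≠ r → p v < v) (hroot : ∀ v, Anc p r v)
    (hspan : ∀ v, v ≠ r → G.Adj (p v) v)
    (hdfs : ∀ x y, G.Adj x y → Anc p x y ∨ Anc p y x)
    (hpre : ∀ u v w : Fin n, u < v → v < w → Anc p u w → Anc p u v)
    (F : Set (Fin n)) (hrF : r ∉ F)
    (x y : Fin n) (hx : x ∉ F) (hy : y ∉ F) (hadj : G.Adj x y)
    (hdiff : ¬ InComp p F x y)
    (ρx ρy : Fin n)
    (hρx : IsCompRoot p F ρx) (hxin : InComp p F ρx x)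
    (hρy : IsCompRoot p F ρy) (hyin : InComp p F ρy y) :
    (p x ≠ y ∧ p y ≠ x ∧ (Anc p x y ∨ Anc p y x)) ∧
    ((Internal p F ρx ∧ Internal p F ρy) ∨
     (¬ Internal p F ρx ∧ Internal p F ρy ∧ Anc p ρy ρx ∧ ρy ≠ ρx) ∨
     (¬ Internal p F ρy ∧ Internal p F ρx ∧ Anc p ρx ρy ∧ ρx ≠ ρy)) := by
  have hdiff' : ¬ InComp p F y x := fun h => hdiff (incomp_symm h)
  have hpx : p x ≠ y := fun h =>
    hdiff (Relation.ReflTransGen.single ⟨hx, hy, Or.inl h⟩)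
  have hpy : p y ≠ x := fun h =>
    hdiff' (Relation.ReflTransGen.single ⟨hy, hx, Or.inl h⟩)
  have hanc := hdfs x y hadj
  refine ⟨⟨hpx, hpy, hanc⟩, ?_⟩
  rcases hanc with hxy | hyx
  · -- x is an ancestor of y
    obtain ⟨hIx, hcond⟩ := main_case hy hdiff' hρy hyin hρx hxin hxy
    by_cases hIy : Internal p F ρy
    · exact Or.inl ⟨hIx, hIy⟩
    · exact Or.inr (Or.inr ⟨hIy, hIx, (hcond hIy).1, (hcond hIy).2⟩)
  · -- y is an ancestor of x
    obtain ⟨hIy, hcond⟩ := main_case hx hdiff hρx hxin hρy hyin hyx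
    by_cases hIx : Internal p F ρx
    · exact Or.inl ⟨hIx, hIy⟩
    · exact Or.inr (Or.inl ⟨hIx, hIy, (hcond hIx).1, (hcond hIx).2⟩)
end

section
/- Let C and C' be two distinct connected components of T \ F that are joined by an edge of G \ F, and suppose r_{C'} < r_C in DFS preorder. Then r_{C'} is a proper ancestor of r_C in T. -/
variable {n : ℕ}

/-- If two distinct components `C, C'` of `T \ F` are joined by an edge of `G \ F`
and `r_{C'} < r_C` in DFS preorder, then `r_{C'}` is a proper ancestor of `r_C`. -/
theorem stmt10
    (G : SimpleGraph (Fin n)) (p : Fin n → Fin n) (r : Fin n)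
    (hG : G.Connected)
    (hpr : p r = r) (hplt : ∀ v, v ≠ r → p v < v) (hroot : ∀ v, Anc p r v)
    (hspan : ∀ v, v ≠ r → G.Adj (p v) v)
    (hdfs : ∀ x y, G.Adj x y → Anc p x y ∨ Anc p y x)
    (hpre : ∀ u v w : Fin n, u < v → v < w → Anc p u w → Anc p u v)
    (F : Set (Fin n)) (hrF : r ∉ F)
    (ρ ρ' : Fin n) (hρ : IsCompRoot p F ρ) (hρ' : IsCompRoot p F ρ')
    (hne : ρ ≠ ρ')
    (hjoin : ∃ x y, G.Adj x y ∧ x ∉ F ∧ y ∉ F ∧ InComp p F ρ x ∧ InComp p F ρ' y)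
    (hlt : ρ' < ρ) :
    Anc p ρ' ρ ∧ ρ' ≠ ρ := by
  -- ancestry implies ≤
  have anc_le : ∀ a b : Fin n, Anc p a b → a ≤ b := by
    intro a b h
    induction h with
    | refl => exact le_refl _
    | @tail m c hbm hma ih =>
      have : p m ≤ m := by
        by_cases hm : m = r
        · subst hm; rw [hpr]
        · exact le_of_lt (hplt m hm)
      rw [hma] at this
      exact le_trans this ih
  have anc_trans : ∀ a b c : Fin n, Anc p a b → Anc p b c → Anc p a c := by
    intro a b c h1 h2
    exact Relation.ReflTransGen.trans h2 h1
  obtain ⟨x, y, hxy, hxF, hyF, hρx, hρ'y⟩ := hjoin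
  have hax : Anc p ρ x := hρ.2 x hρx
  have hay : Anc p ρ' y := hρ'.2 y hρ'y
  -- a common descendant of both ρ and ρ'
  have hcommon : ∃ w, Anc p ρ w ∧ Anc p ρ' w := by
    rcases hdfs x y hxy with h | h
    · exact ⟨y, anc_trans _ _ _ hax h, hay⟩
    · exact ⟨x, hax, anc_trans _ _ _ hay h⟩
  obtain ⟨w, hw1, hw2⟩ := hcommon
  refine ⟨?_, ne_of_lt hlt⟩
  rcases eq_or_lt_of_le (anc_le ρ w hw1) with heq | hltw
  · subst heq; exact hw2
  · exact hpre ρ' ρ w hlt hltw hw2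
end
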